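/- Let A and B be sets and let h : A × B → ℂ satisfy sup_{a∈A}|h(a,b)| < ∞ for each fixed b ∈ B and sup_{b∈B}|h(a,b)| < ∞ for each fixed a ∈ A, and define the semimetrics d_A(a₁,a₂) := sup_{b∈B}|h(a₁,b) − h(a₂,b)| on A and d_B(b₁,b₂) := sup_{a∈A}|h(a,b₁) − h(a,b₂)| on B. If the intrinsic covering number N_A(ε) is finite for some ε > 0, then the intrinsic covering number N_B(ρ) is finite for every ρ > 2ε. -/

import Mathlib

/-!
Fix a finite `ε`-net `F` of `A`. Since every row `h a ·` is bounded, the map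
`b ↦ (h a b)_{a ∈ F}` has bounded, hence totally bounded, range in the finite-dimensional space
`F → ℂ`, so finitely many `b'` approximate every `b` within `δ = ρ - 2ε` on all of `F`.
For an arbitrary `a`, pick `a' ∈ F` with `d_A(a, a') ≤ ε`; going through `a'` gives
`|h(a,b) − h(a,b')| ≤ ε + δ + ε = ρ`, so these `b'` form a `ρ`-net of `B`.
-/

/-- The intrinsic covering number `N_S(ε)` of a subset `S` of a semimetric space
`(E, d)`: the least cardinality of a finite set `F ⊆ S` such that every point of `S`
is within distance `ε` of some point of `F`; `∞` if no such finite set exists. -/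
noncomputable def icov {E : Type*} (d : E → E → ℝ) (S : Set E) (ε : ℝ) : ℕ∞ :=
  sInf ((fun F : Finset E => (F.card : ℕ∞)) ''
    {F : Finset E | ↑F ⊆ S ∧ ∀ x ∈ S, ∃ y ∈ F, d x y ≤ ε})

open Set Bornology

theorem icov_ne_top_iff {E : Type*} {d : E → E → ℝ} {S : Set E} {ε : ℝ} :
    icov d S ε ≠ ⊤ ↔ ∃ F : Finset E, ↑F ⊆ S ∧ ∀ x ∈ S, ∃ y ∈ F, d x y ≤ ε := by
  simp [icov, sInf_eq_top]

theorem TotallyBounded.exists_finset_dist_lt {B X : Type*} [PseudoMetricSpace X] {φ : B → X}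
    (hφ : TotallyBounded (range φ)) {δ : ℝ} (hδ : 0 < δ) :
    ∃ G : Finset B, ∀ b, ∃ b' ∈ G, dist (φ b) (φ b') < δ := by
  obtain ⟨t, hts, htfin, hcover⟩ := Metric.finite_approx_of_totallyBounded hφ δ hδ
  rw [← image_univ] at hts
  obtain ⟨u, -, hufin, rfl⟩ := htfin.exists_subset_finite_image_eq hts
  refine ⟨hufin.toFinset, fun b => ?_⟩
  obtain ⟨_, ⟨b', hb', rfl⟩, hb⟩ := mem_iUnion₂.1 (hcover (mem_range_self b))
  exact ⟨b', hufin.mem_toFinset.2 hb', hb⟩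

theorem totallyBounded_range_pi {ι B X : Type*} [Fintype ι] [PseudoMetricSpace X] [ProperSpace X]
    {f : B → ι → X} (hf : ∀ i, IsBounded (range fun b => f b i)) :
    TotallyBounded (range f) := by
  have hbdd : IsBounded (range f) := forall_isBounded_image_eval_iff.1 fun i => by
    rw [← range_comp]; exact hf i
  exact totallyBounded_closure.1 hbdd.isCompact_closure.totallyBounded

theorem norm_sub_le_iSup_norm_sub {ι E : Type*} [SeminormedAddCommGroup E] {f g : ι → E}
    (hf : ∃ M, ∀ i, ‖f i‖ ≤ M) (hg : ∃ M, ∀ i, ‖g i‖ ≤ M) (i : ι) :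
    ‖f i - g i‖ ≤ ⨆ j, ‖f j - g j‖ := by
  obtain ⟨M, hM⟩ := hf
  obtain ⟨N, hN⟩ := hg
  refine le_ciSup (f := fun j => ‖f j - g j‖) ⟨M + N, forall_mem_range.2 fun j => ?_⟩ i
  exact (norm_sub_le _ _).trans (add_le_add (hM j) (hN j))

theorem statement6_general {A B : Type*} (h : A → B → ℂ)
    (hrow : ∀ a : A, ∃ M : ℝ, ∀ b : B, ‖h a b‖ ≤ M)
    (dA : A → A → ℝ) (dB : B → B → ℝ)
    (hdA : ∀ a₁ a₂ : A, dA a₁ a₂ = ⨆ b : B, ‖h a₁ b - h a₂ b‖)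
    (hdB : ∀ b₁ b₂ : B, dB b₁ b₂ = ⨆ a : A, ‖h a b₁ - h a b₂‖)
    (ε : ℝ) (hε : 0 < ε)
    (hfin : icov dA Set.univ ε ≠ ⊤) :
    ∀ ρ : ℝ, 2 * ε < ρ → icov dB Set.univ ρ ≠ ⊤ := by
  intro ρ hρ
  obtain ⟨F, -, hF⟩ := icov_ne_top_iff.1 hfin
  have hnet : TotallyBounded (range fun b (a : F) => h a b) :=
    totallyBounded_range_pi fun a => isBounded_iff_forall_norm_le.2 <| by
      simpa only [forall_mem_range] using hrow a
  obtain ⟨G, hG⟩ := hnet.exists_finset_dist_lt (sub_pos.2 hρ)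
  refine icov_ne_top_iff.2 ⟨G, subset_univ _, fun b _ => ?_⟩
  obtain ⟨b', hb'G, hbb'⟩ := hG b
  refine ⟨b', hb'G, (hdB b b').symm ▸ Real.iSup_le (fun a => ?_) (by linarith)⟩
  obtain ⟨a', ha'F, haa'⟩ := hF a (mem_univ a)
  have hclose : ∀ c, dist (h a c) (h a' c) ≤ ε := fun c => (dist_eq_norm _ _).trans_le <|
    (norm_sub_le_iSup_norm_sub (hrow a) (hrow a') c).trans (hdA a a' ▸ haa')
  have hstep : dist (h a' b) (h a' b') < ρ - 2 * ε :=
    (dist_le_pi_dist _ _ ⟨a', ha'F⟩).trans_lt hbb'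
  rw [← dist_eq_norm]
  calc dist (h a b) (h a b')
      ≤ dist (h a b) (h a' b) + dist (h a' b) (h a' b') + dist (h a' b') (h a b') :=
        dist_triangle4 _ _ _ _
    _ ≤ ε + (ρ - 2 * ε) + ε :=
        add_le_add_three (hclose b) hstep.le (dist_comm (h a b') _ ▸ hclose b')
    _ = ρ := by ring

/-- Let `h : A × B → ℂ` be bounded in each variable separately, with the
semimetrics `d_A(a₁,a₂) := sup_{b∈B} |h(a₁,b) − h(a₂,b)|` on `A` and
`d_B(b₁,b₂) := sup_{a∈A} |h(a,b₁) − h(a,b₂)|` on `B`.  If the intrinsic covering number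
`N_A(ε)` is finite for some `ε > 0`, then the intrinsic covering number `N_B(ρ)` is
finite for every `ρ > 2ε`. -/
theorem statement6 {A B : Type*} (h : A → B → ℂ)
    (hcol : ∀ b : B, ∃ M : ℝ, ∀ a : A, ‖h a b‖ ≤ M)
    (hrow : ∀ a : A, ∃ M : ℝ, ∀ b : B, ‖h a b‖ ≤ M)
    (dA : A → A → ℝ) (dB : B → B → ℝ)
    (hdA : ∀ a₁ a₂ : A, dA a₁ a₂ = ⨆ b : B, ‖h a₁ b - h a₂ b‖)
    (hdB : ∀ b₁ b₂ : B, dB b₁ b₂ = ⨆ a : A, ‖h a b₁ - h a b₂‖)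
    (ε : ℝ) (hε : 0 < ε)
    (hfin : icov dA Set.univ ε ≠ ⊤) :
    ∀ ρ : ℝ, 2 * ε < ρ → icov dB Set.univ ρ ≠ ⊤ :=
  statement6_general h hrow dA dB hdA hdB ε hε hfin
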